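/- arXiv:1002.2868 — 3 statements merged into one kernel-verified Lean document; each statement's English description precedes it below -/
import Mathlib

section
/- The notion of supported proof is consistent: for any transition system specification and any closed formula φ, if φ has a supported proof then no formula contradicting φ has a supported proof. -/
/-!
A Transition System Specification (TSS) over a type `T` of closed terms and a type `L` of
labels.  Since the notions of supported model and supported proof only ever refer to *closed
instances* of the deduction rules (a deduction rule together with a closing substitution
applied to it), we represent a TSS by the set of closed instances of its deduction rules.
-/

/-- Closed formulae: the positive formula `t →[l] t'` and the negative formula `t ↛[l]`. -/
inductive Formula (T L : Type) : Type
  | pos : T → L → T → Formula T L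
  | neg : T → L → Formula T L

namespace Formula

/-- `t →[l] t'` and `t ↛[l]` contradict each other (and nothing else). -/
def contradicts {T L : Type} : Formula T L → Formula T L → Prop
  | pos t l _, neg u m => t = u ∧ l = m
  | neg t l, pos u m _ => t = u ∧ l = m
  | _, _ => False

end Formula

/-- A closed instance of a deduction rule: a set of premises together with a positive
conclusion `src →[lbl] tgt`. -/
structure Rule (T L : Type) where
  prem : Set (Formula T L)
  src : T
  lbl : L
  tgt : T

/-- A transition system specification, given by the set of closed instances of its
deduction rules. -/
structure TSS (T L : Type) where
  rules : Set (Rule T L)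

/-- A transition relation (a set of closed positive formulae, represented as triples `(t, l, t')`)
is *consistent* with a set `Ψ` of closed formulae when every positive formula of `Ψ` belongs to
the relation, and no formula of the relation contradicts a negative formula of `Ψ`. -/
def Consistent {T L : Type} (Tr : Set (T × L × T)) (Ψ : Set (Formula T L)) : Prop :=
  (∀ t l t', Formula.pos t l t' ∈ Ψ → (t, l, t') ∈ Tr) ∧
  (∀ t l, Formula.neg t l ∈ Ψ → ∀ t', (t, l, t') ∉ Tr)

/-- `Tr` is a supported model of the TSS `S` for the set `P` of closed terms and the set `L'`
of labels:
(1) every transition in `Tr` is the conclusion of a closed instance of a deduction rule whose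
    premises are consistent with `Tr`, and
(2) whenever a closed instance of a deduction rule has conclusion `p →[l] p'` with `p ∈ P` and
    `l ∈ L'` and premises consistent with `Tr`, then `(p, l, p') ∈ Tr`. -/
def SupportedModelFor {T L : Type} (S : TSS T L) (P : Set T) (L' : Set L)
    (Tr : Set (T × L × T)) : Prop :=
  (∀ q l q', (q, l, q') ∈ Tr →
      ∃ r ∈ S.rules, r.src = q ∧ r.lbl = l ∧ r.tgt = q' ∧ Consistent Tr r.prem) ∧
  (∀ p ∈ P, ∀ l ∈ L', ∀ p',
      (∃ r ∈ S.rules, r.src = p ∧ r.lbl = l ∧ r.tgt = p' ∧ Consistent Tr r.prem) →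
      (p, l, p') ∈ Tr)

/-- `Tr` is a supported model of the TSS `S` (for all closed terms and all labels). -/
def SupportedModel {T L : Type} (S : TSS T L) (Tr : Set (T × L × T)) : Prop :=
  SupportedModelFor S Set.univ Set.univ Tr

/-- The TSS `S` provides a supported proof of the closed formula `φ`.  This inductive
definition captures precisely the well-founded upwardly branching proof trees: a node labelled
with a positive formula must, together with the set of formulae labelling the nodes above it,
form a closed instance of a deduction rule; a node labelled with a negative formula has a set
`K` of formulae above it such that every closed instance of a deduction rule whose conclusion
contradicts the formula has a premise contradicted by some formula of `K`. -/
inductive SupportedProof {T L : Type} (S : TSS T L) : Formula T L → Prop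
  | pos (r : Rule T L) (hr : r ∈ S.rules)
      (hprem : ∀ ψ ∈ r.prem, SupportedProof S ψ) :
      SupportedProof S (Formula.pos r.src r.lbl r.tgt)
  | neg (t : T) (l : L) (K : Set (Formula T L))
      (hK : ∀ ψ ∈ K, SupportedProof S ψ)
      (hrules : ∀ r ∈ S.rules, r.src = t → r.lbl = l →
          ∃ χ ∈ K, ∃ χ' ∈ r.prem, Formula.contradicts χ χ') :
      SupportedProof S (Formula.neg t l)

/-- A TSS is s-complete when for every closed positive formula, either the formula itself or
the (unique) formula contradicting it has a supported proof. -/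
def SComplete {T L : Type} (S : TSS T L) : Prop :=
  ∀ t l t', SupportedProof S (Formula.pos t l t') ∨ SupportedProof S (Formula.neg t l)

/-!
Induction on the proof of `φ`. A proof of `t →l t'` rests on a rule instance all of whose
premises are proved, whereas a proof of `t ↛l` must prove some formula contradicting one of
those premises; the induction hypothesis for that premise forbids this. The case where `φ`
is negative is the same argument read the other way round.
-/

namespace Formula

theorem contradicts.symm {T L : Type} {φ ψ : Formula T L} (h : contradicts φ ψ) :
    contradicts ψ φ := by
  cases φ <;> cases ψ <;> simp_all [contradicts]

end Formula

theorem SupportedProof.not_contradicts {T L : Type} {S : TSS T L} {φ ψ : Formula T L}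
    (hφ : SupportedProof S φ) (hψ : SupportedProof S ψ) : ¬ Formula.contradicts φ ψ := by
  induction hφ generalizing ψ with
  | pos r hr _ ih =>
    rcases hψ with _ | ⟨t, l, K, hK, hrules⟩
    · exact nofun
    · rintro ⟨rfl, rfl⟩
      obtain ⟨χ, hχK, χ', hχ'prem, hχχ'⟩ := hrules r hr rfl rfl
      exact ih χ' hχ'prem (hK χ hχK) hχχ'.symm
  | neg t l K _ hrules ih =>
    rcases hψ with ⟨r, hr, hprem⟩ | _
    · rintro ⟨rfl, rfl⟩
      obtain ⟨χ, hχK, χ', hχ'prem, hχχ'⟩ := hrules r hr rfl rfl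
      exact ih χ hχK (hprem χ' hχ'prem) hχχ'
    · exact nofun

/-- The notion of supported proof is consistent: if a closed formula `φ` has
a supported proof, then no formula contradicting `φ` has a supported proof. -/
theorem supportedProof_consistent {T L : Type} (S : TSS T L) (φ ψ : Formula T L)
    (hφ : SupportedProof S φ) (hψφ : Formula.contradicts ψ φ) :
    ¬ SupportedProof S ψ :=
  fun hψ => hφ.not_contradicts hψ hψφ.symm
end

section
/- In the TSS consisting of the two deduction rules r1 = ({p →s p}, p →s p) and r2 = ({p ↛s}, p →s p) over the signature with the single constant p and the single label s, neither the formula p →s p nor the formula p ↛s has a supported proof; hence this TSS has a unique supported model but is not s-complete (so the converse of the theorem 's-completeness implies a unique supported model' fails). -/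
/-- The deduction rule `r1 = ({p →s p}, p →s p)` over the signature with the single constant
`p` (the unique element of `Unit`) and the single label `s` (the unique element of `Unit`). -/
def r1 : Rule Unit Unit := ⟨{Formula.pos () () ()}, (), (), ()⟩

/-- The deduction rule `r2 = ({p ↛s}, p →s p)`. -/
def r2 : Rule Unit Unit := ⟨{Formula.neg () ()}, (), (), ()⟩

/-- Every rule needs a proved premise, and a negative formula must refute some rule, hence
needs proved formulae above it as well; so no proof tree can be well founded. -/
theorem not_supportedProof_of_prem_nonempty {T L : Type} {S : TSS T L}
    (hprem : ∀ r ∈ S.rules, r.prem.Nonempty)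
    (hcover : ∀ t l, ∃ r ∈ S.rules, r.src = t ∧ r.lbl = l) (φ : Formula T L) :
    ¬ SupportedProof S φ := by
  intro h
  induction h with
  | pos r hr _ ih =>
    obtain ⟨ψ, hψ⟩ := hprem r hr
    exact ih ψ hψ
  | neg t l K _ hrules ih =>
    obtain ⟨r, hr, rfl, rfl⟩ := hcover t l
    obtain ⟨χ, hχ, -⟩ := hrules r hr rfl rfl
    exact ih χ hχ

abbrev tssR1R2 : TSS Unit Unit := ⟨{r1, r2}⟩

theorem not_supportedProof_r1_r2 (φ : Formula Unit Unit) : ¬ SupportedProof tssR1R2 φ := by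
  refine not_supportedProof_of_prem_nonempty (S := tssR1R2) ?_
    (fun _ _ => ⟨r1, Or.inl rfl, rfl, rfl⟩) φ
  rintro r (rfl | rfl)
  exacts [Set.singleton_nonempty _, Set.singleton_nonempty _]

theorem supportedModel_r1_r2_univ : SupportedModel tssR1R2 Set.univ := by
  refine ⟨fun _ _ _ _ => ⟨r1, Or.inl rfl, rfl, rfl, rfl, ?_, ?_⟩,
    fun _ _ _ _ _ _ => trivial⟩
  · exact fun _ _ _ _ => trivial
  · simp [r1]

/-- If `p →s p` were missing, the premise `p ↛s` of `r2` would hold, forcing `p →s p`. -/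
theorem SupportedModel.eq_univ_r1_r2 {Tr : Set (Unit × Unit × Unit)}
    (hTr : SupportedModel tssR1R2 Tr) : Tr = Set.univ := by
  refine Set.eq_univ_of_forall fun ⟨(), (), ()⟩ => ?_
  by_contra hnot
  refine hnot (hTr.2 () trivial () trivial () ⟨r2, Or.inr rfl, rfl, rfl, rfl, ?_, ?_⟩)
  · simp [r2]
  · rintro ⟨⟩ ⟨⟩ - ⟨⟩
    exact hnot

/-- In the TSS consisting of the two rules `r1` and `r2`, neither `p →s p`
nor `p ↛s` has a supported proof; hence this TSS has a unique supported model but is not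
s-complete (so the converse of 's-completeness implies a unique supported model' fails). -/
theorem tss_r1_r2_unique_model_not_sComplete :
    ¬ SupportedProof (⟨{r1, r2}⟩ : TSS Unit Unit) (Formula.pos () () ()) ∧
    ¬ SupportedProof (⟨{r1, r2}⟩ : TSS Unit Unit) (Formula.neg () ()) ∧
    (∃! Tr : Set (Unit × Unit × Unit), SupportedModel (⟨{r1, r2}⟩ : TSS Unit Unit) Tr) ∧
    ¬ SComplete (⟨{r1, r2}⟩ : TSS Unit Unit) :=
  ⟨not_supportedProof_r1_r2 _, not_supportedProof_r1_r2 _,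
    ⟨Set.univ, supportedModel_r1_r2_univ, fun _ hTr => hTr.eq_univ_r1_r2⟩,
    fun hsc => (hsc () () ()).elim (not_supportedProof_r1_r2 _) (not_supportedProof_r1_r2 _)⟩
end

section
/- Let P4 be the Esterel program (present s0 then emit s0 else 0) ∥ (present s0 then (present s1 then 0 else emit s1) else 0) with context c = P4. In the Esterel TSS, neither the emission predicate P4 ⊨_{P4} s0 nor its negation ¬(P4 ⊨_{P4} s0) has a supported proof; hence P4 is not constructive. -/
/-!
A fragment of Esterel and its TSS.  Closed programs are generated by
`p, q ::= 0 | emit x | present x then p else q | p ; q | p ∥ q` where `x` ranges over a type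
`S` of signals (no input signals and no local-signal encapsulation, and the input evaluation
is empty throughout, so it is omitted).  The TSS is represented by the set of closed instances
of its deduction rules, all parameterized by a fixed closed context program `c`.
-/

/-- Esterel programs (the fragment without inputs, traps, loops, time and encapsulation). -/
inductive Prog (S : Type) : Type
  | nil : Prog S                             -- 0
  | emit : S → Prog S                        -- emit x
  | present : S → Prog S → Prog S → Prog S   -- present x then p else q
  | seq : Prog S → Prog S → Prog S           -- p ; q
  | par : Prog S → Prog S → Prog S           -- p ∥ q

/-- The subterms of a program (the program itself together with the subterms of its
immediate components). -/
def Prog.subterms {S : Type} : Prog S → Set (Prog S)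
  | .nil => {Prog.nil}
  | .emit x => {Prog.emit x}
  | .present x p q => insert (Prog.present x p q) (p.subterms ∪ q.subterms)
  | .seq p q => insert (Prog.seq p q) (p.subterms ∪ q.subterms)
  | .par p q => insert (Prog.par p q) (p.subterms ∪ q.subterms)

/-- Closed formulae of the Esterel TSS (for a fixed context, which is left implicit):
emission predicates `p ⊨ x`, termination predicates `p ✓`, transitions `p →x p'`, and their
negations. -/
inductive EFormula (S : Type) : Type
  | emits : Prog S → S → EFormula S            -- p ⊨ x
  | nemits : Prog S → S → EFormula S           -- ¬(p ⊨ x)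
  | term : Prog S → EFormula S                 -- p ✓
  | nterm : Prog S → EFormula S                -- ¬(p ✓)
  | trans : Prog S → S → Prog S → EFormula S   -- p →x p'
  | ntrans : Prog S → S → EFormula S           -- p ↛x

namespace EFormula

/-- Positive formulae. -/
def isPos {S : Type} : EFormula S → Prop
  | emits _ _ => True
  | term _ => True
  | trans _ _ _ => True
  | _ => False

/-- Each positive formula is contradicted by (exactly) its negation, and vice versa. -/
def contradicts {S : Type} : EFormula S → EFormula S → Prop
  | emits p x, nemits q y => p = q ∧ x = y
  | nemits p x, emits q y => p = q ∧ x = y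
  | term p, nterm q => p = q
  | nterm p, term q => p = q
  | trans p x _, ntrans q y => p = q ∧ x = y
  | ntrans p x, trans q y _ => p = q ∧ x = y
  | _, _ => False

end EFormula

/-- The labels of the Esterel TSS: `⊨ x`, `✓` and `→x`. -/
inductive ELabel (S : Type) : Type
  | emits : S → ELabel S
  | term : ELabel S
  | trans : S → ELabel S

/-- The source (program) of a formula. -/
def EFormula.src {S : Type} : EFormula S → Prog S
  | .emits p _ => p
  | .nemits p _ => p
  | .term p => p
  | .nterm p => p
  | .trans p _ _ => p
  | .ntrans p _ => p

/-- The label of a formula. -/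
def EFormula.lbl {S : Type} : EFormula S → ELabel S
  | .emits _ x => ELabel.emits x
  | .nemits _ x => ELabel.emits x
  | .term _ => ELabel.term
  | .nterm _ => ELabel.term
  | .trans _ x _ => ELabel.trans x
  | .ntrans _ x => ELabel.trans x

/-- The closed instances of the deduction rules of the Esterel TSS with context `c`:
`EsterelRule c K φ` holds when `(K, φ)` is a closed instance of a deduction rule
(with premises `K` and conclusion `φ`). -/
inductive EsterelRule {S : Type} (c : Prog S) : Set (EFormula S) → EFormula S → Prop
  | e0 (x) : EsterelRule c ∅ (EFormula.emits (Prog.emit x) x)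
  | s0 (p q x) : EsterelRule c {EFormula.emits p x} (EFormula.emits (Prog.seq p q) x)
  | s1 (p q x) : EsterelRule c {EFormula.term p, EFormula.emits q x}
      (EFormula.emits (Prog.seq p q) x)
  | s2 (p p' q x x') : EsterelRule c
      {EFormula.trans p x' p', EFormula.term p', EFormula.emits q x}
      (EFormula.emits (Prog.seq p q) x)
  | p0 (p q x) : EsterelRule c {EFormula.emits p x} (EFormula.emits (Prog.par p q) x)
  | p1 (p q x) : EsterelRule c {EFormula.emits q x} (EFormula.emits (Prog.par p q) x)
  | f0 (s p q x) : EsterelRule c {EFormula.emits c s, EFormula.emits p x}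
      (EFormula.emits (Prog.present s p q) x)
  | f1 (s p q x) : EsterelRule c {EFormula.nemits c s, EFormula.emits q x}
      (EFormula.emits (Prog.present s p q) x)
  | nil : EsterelRule c ∅ (EFormula.term Prog.nil)
  | em (x) : EsterelRule c ∅ (EFormula.trans (Prog.emit x) x Prog.nil)
  | seq0 (p p' q q' x x') : EsterelRule c
      {EFormula.trans p x p', EFormula.term p', EFormula.trans q x' q'}
      (EFormula.trans (Prog.seq p q) x q')
  | seq1 (p p' q q' x x') : EsterelRule c
      {EFormula.trans p x p', EFormula.term p', EFormula.trans q x' q'}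
      (EFormula.trans (Prog.seq p q) x' q')
  | seq2 (p q q' x) : EsterelRule c {EFormula.term p, EFormula.trans q x q'}
      (EFormula.trans (Prog.seq p q) x q')
  | seq3 (p p' q x) : EsterelRule c
      {EFormula.trans p x p', EFormula.term p', EFormula.term q}
      (EFormula.trans (Prog.seq p q) x p')
  | seq4 (p q) : EsterelRule c {EFormula.term p, EFormula.term q}
      (EFormula.term (Prog.seq p q))
  | par0 (p p' q q' x x') : EsterelRule c
      {EFormula.trans p x p', EFormula.trans q x' q'}
      (EFormula.trans (Prog.par p q) x (Prog.par p' q'))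
  | par1 (p p' q q' x x') : EsterelRule c
      {EFormula.trans p x p', EFormula.trans q x' q'}
      (EFormula.trans (Prog.par p q) x' (Prog.par p' q'))
  | par2 (p q q' x) : EsterelRule c {EFormula.term p, EFormula.trans q x q'}
      (EFormula.trans (Prog.par p q) x q')
  | par3 (p p' q x) : EsterelRule c {EFormula.trans p x p', EFormula.term q}
      (EFormula.trans (Prog.par p q) x p')
  | par4 (p q) : EsterelRule c {EFormula.term p, EFormula.term q}
      (EFormula.term (Prog.par p q))
  | if0 (s p p' q x) : EsterelRule c {EFormula.emits c s, EFormula.trans p x p'}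
      (EFormula.trans (Prog.present s p q) x p')
  | if1 (s p q q' x) : EsterelRule c {EFormula.nemits c s, EFormula.trans q x q'}
      (EFormula.trans (Prog.present s p q) x q')
  | if4 (s p q) : EsterelRule c {EFormula.emits c s, EFormula.term p}
      (EFormula.term (Prog.present s p q))
  | if5 (s p q) : EsterelRule c {EFormula.nemits c s, EFormula.term q}
      (EFormula.term (Prog.present s p q))

/-- A transition relation `T` (a set of positive closed formulae) is consistent with a set
`Ψ` of closed formulae: every positive formula of `Ψ` belongs to `T`, and no formula of `T`
contradicts a negative formula of `Ψ`. -/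
def EConsistent {S : Type} (T Ψ : Set (EFormula S)) : Prop :=
  (∀ φ ∈ Ψ, φ.isPos → φ ∈ T) ∧
  (∀ φ ∈ Ψ, ¬ φ.isPos → ∀ χ ∈ T, ¬ χ.contradicts φ)

/-- `T` is a supported model of the Esterel TSS with context `c`, for the set `P` of closed
terms and the set `L'` of labels: `T` is a transition relation (a set of positive formulae)
such that (1) every formula in `T` is the conclusion of a closed instance of a deduction rule
whose premises are consistent with `T`, and (2) for every closed instance of a deduction rule
whose conclusion has its source in `P` and its label in `L'` and whose premises are consistent
with `T`, the conclusion belongs to `T`. -/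
def ESupportedModel {S : Type} (c : Prog S) (P : Set (Prog S)) (L' : Set (ELabel S))
    (T : Set (EFormula S)) : Prop :=
  (∀ φ ∈ T, φ.isPos) ∧
  (∀ φ ∈ T, ∃ K, EsterelRule c K φ ∧ EConsistent T K) ∧
  (∀ K φ, EsterelRule c K φ → φ.src ∈ P → φ.lbl ∈ L' → EConsistent T K → φ ∈ T)

/-- The Esterel TSS with context `c` provides a supported proof of the closed formula `φ`.
This inductive definition captures precisely the well-founded upwardly branching proof trees:
a node labelled with a positive formula must, together with the set of formulae labelling the
nodes above it, form a closed instance of a deduction rule; a node labelled with a negative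
formula has a set `K` of formulae above it such that every closed instance of a deduction rule
whose conclusion contradicts the formula has a premise contradicted by some formula of `K`. -/
inductive ESupProof {S : Type} (c : Prog S) : EFormula S → Prop
  | pos (K : Set (EFormula S)) (φ : EFormula S) (hrule : EsterelRule c K φ)
      (hprem : ∀ ψ ∈ K, ESupProof c ψ) : ESupProof c φ
  | neg (φ : EFormula S) (hφ : ¬ φ.isPos) (K : Set (EFormula S))
      (hK : ∀ ψ ∈ K, ESupProof c ψ)
      (hrules : ∀ K' ψ', EsterelRule c K' ψ' → ψ'.contradicts φ →
          ∃ χ ∈ K, ∃ χ' ∈ K', χ.contradicts χ') :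
      ESupProof c φ

/-- The program
`P4 = (present s0 then emit s0 else 0) ∥ (present s0 then (present s1 then 0 else emit s1) else 0)`. -/
def P4 {S : Type} (s0 s1 : S) : Prog S :=
  Prog.par (Prog.present s0 (Prog.emit s0) Prog.nil)
    (Prog.present s0 (Prog.present s1 Prog.nil (Prog.emit s1)) Prog.nil)

/-!
Both branches of `P4` test `s0` in the context `P4` itself, so every derivation of `P4 ⊨ s0`
contains a derivation of `P4 ⊨ s0` (rule `f0`, or rule `f1` leading to the underivable `0 ⊨ s0`),
and no well-founded one exists. Dually, refuting `P4 ⊨ s0` requires refuting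
`present s0 then emit s0 else 0 ⊨ s0`, and hence (rule `f0`, with `emit s0 ⊨ s0` an axiom)
refuting `P4 ⊨ s0` again.
-/

variable {S : Type}

theorem EsterelRule.isPos {c : Prog S} {K : Set (EFormula S)} {φ : EFormula S}
    (h : EsterelRule c K φ) : φ.isPos := by
  cases h <;> trivial

/-- Every supported proof of a member of `B` would have an immediate subproof of a member of
`B`. -/
def EUnfounded (c : Prog S) (B : Set (EFormula S)) : Prop :=
  (∀ K φ, EsterelRule c K φ → φ ∈ B → ∃ ψ ∈ K, ψ ∈ B) ∧
  (∀ φ ∈ B, ¬ φ.isPos → ∃ K ψ, EsterelRule c K ψ ∧ ψ.contradicts φ ∧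
    ∀ χ' ∈ K, ∀ χ : EFormula S, χ.contradicts χ' → χ ∈ B)

theorem EUnfounded.not_eSupProof {c : Prog S} {B : Set (EFormula S)} (hB : EUnfounded c B)
    {φ : EFormula S} (hφ : φ ∈ B) : ¬ ESupProof c φ := by
  intro h
  induction h with
  | pos K φ hrule _ ih =>
    obtain ⟨ψ, hψK, hψB⟩ := hB.1 K φ hrule hφ
    exact ih ψ hψK hψB
  | neg φ hneg K _ hrules ih =>
    obtain ⟨K', ψ', hrule, hψ', hK'⟩ := hB.2 φ hφ hneg
    obtain ⟨χ, hχK, χ', hχ'K', hχ⟩ := hrules K' ψ' hrule hψ'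
    exact ih χ hχK (hK' χ' hχ'K' χ hχ)

theorem EFormula.eq_nemits_of_contradicts_emits {χ : EFormula S} {p : Prog S} {x : S}
    (h : χ.contradicts (EFormula.emits p x)) : χ = EFormula.nemits p x := by
  cases χ <;> simp_all [EFormula.contradicts]

section P4

variable (s0 s1 : S)

abbrev P4Left : Prog S := .present s0 (.emit s0) .nil

abbrev P4Right : Prog S := .present s0 (.present s1 .nil (.emit s1)) .nil

theorem eUnfounded_P4_emits :
    EUnfounded (P4 s0 s1) ((EFormula.emits · s0) ''
      {P4 s0 s1, P4Left s0, P4Right s0 s1, .nil}) := by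
  refine ⟨?_, ?_⟩
  · rintro K φ hrule ⟨p, hp, rfl⟩
    simp only [Set.mem_insert_iff, Set.mem_singleton_iff] at hp
    rcases hp with rfl | rfl | rfl | rfl <;> cases hrule <;> simp [P4]
  · rintro φ ⟨p, -, rfl⟩ hneg
    exact hneg.elim trivial

theorem eUnfounded_P4_nemits :
    EUnfounded (P4 s0 s1) {.nemits (P4 s0 s1) s0, .nemits (P4Left s0) s0,
      .nemits (.emit s0) s0} := by
  refine ⟨fun K φ hrule hφ => ?_, ?_⟩
  · have := hrule.isPos
    simp only [Set.mem_insert_iff, Set.mem_singleton_iff] at hφ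
    rcases hφ with rfl | rfl | rfl <;> cases this
  · intro φ hφ _
    simp only [Set.mem_insert_iff, Set.mem_singleton_iff] at hφ
    rcases hφ with rfl | rfl | rfl
    · refine ⟨_, _, .p0 (P4Left s0) (P4Right s0 s1) s0, ⟨rfl, rfl⟩, ?_⟩
      rintro χ' rfl χ hχ
      simp [EFormula.eq_nemits_of_contradicts_emits hχ]
    · refine ⟨_, _, .f0 s0 (.emit s0) .nil s0, ⟨rfl, rfl⟩, ?_⟩
      rintro χ' (rfl | rfl) χ hχ <;> simp [EFormula.eq_nemits_of_contradicts_emits hχ]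
    · exact ⟨_, _, .e0 s0, ⟨rfl, rfl⟩, fun _ h => h.elim⟩

end P4

theorem P4_not_constructive_general {S : Type} (s0 s1 : S) :
    ¬ ESupProof (P4 s0 s1) (EFormula.emits (P4 s0 s1) s0) ∧
    ¬ ESupProof (P4 s0 s1) (EFormula.nemits (P4 s0 s1) s0) :=
  ⟨(eUnfounded_P4_emits s0 s1).not_eSupProof ⟨_, by simp, rfl⟩,
    (eUnfounded_P4_nemits s0 s1).not_eSupProof (by simp)⟩

/-- In the Esterel TSS with context `c = P4`, neither the emission
predicate `P4 ⊨ s0` nor its negation `¬(P4 ⊨ s0)` has a supported proof; hence `P4` is not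
constructive. -/
theorem P4_not_constructive {S : Type} (s0 s1 : S) (hs : s0 ≠ s1) :
    ¬ ESupProof (P4 s0 s1) (EFormula.emits (P4 s0 s1) s0) ∧
    ¬ ESupProof (P4 s0 s1) (EFormula.nemits (P4 s0 s1) s0) :=
  P4_not_constructive_general s0 s1
end
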